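/- Let (M = G/H, g) be a compact g.o. space with associated operator Λ on 𝔪, and let X, Y ∈ 𝔪 be eigenvectors of Λ with distinct eigenvalues λ and μ respectively. Then there exists h ∈ 𝔥 such that [X, Y] = (λ/(λ − μ))[h, X] + (μ/(λ − μ))[h, Y]. -/

import Mathlib

/-!
Write `V = X + Y`, so that `ΛV = λX + μY`. The g.o. property gives `a ∈ 𝔥` with `a + V`
a geodesic vector, which by the symmetry of `Λ` and the invariance of the Killing form says
exactly that `[a + V, ΛV]` is Killing-orthogonal to `𝔪`. Expanding,
`[a + V, ΛV] = λ[a, X] + μ[a, Y] - (λ - μ)[X, Y]`, and every term lies in `𝔪`: the first two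
by `Ad(H)`-invariance of `𝔪`, and `[X, Y]` because, for `k ∈ 𝔥`, `B([X, Y], k) = -B(X, [k, Y])`
pairs two eigenvectors of `Λ` with different eigenvalues. Definiteness of the Killing form
then forces `[a + V, ΛV] = 0`.
-/

open Module

/-- A nonzero `X ∈ 𝔤` is a *geodesic vector* when the orbit `γ(t) = exp(tX)·o` is a
geodesic of the homogeneous Riemannian manifold `(G/K, g)`.  Since homogeneous Riemannian
geometry is not available in Mathlib, we encode this notion by its standard algebraic
characterization (Kowalski–Vanhecke): `⟨[X,Y]_𝔪, X_𝔪⟩ = 0` for all `Y ∈ 𝔪`, where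
`⟨u, v⟩ = B(Λu, v)`, `B = -Killing form`, `Λ` is the associated operator of `g` and
`p` is the projection of `𝔤` onto `𝔪` along `𝔨`. -/
def IsGeodesicVector {𝔤 : Type*} [LieRing 𝔤] [LieAlgebra ℝ 𝔤]
    (𝔪 : Submodule ℝ 𝔤) (p Λ : 𝔤 →ₗ[ℝ] 𝔤) (X : 𝔤) : Prop :=
  ∀ Y ∈ 𝔪, -(killingForm ℝ 𝔤 (Λ (p ⁅X, Y⁆)) (p X)) = 0

/-- `(G/H, g)` is a g.o. space: every geodesic through the origin `o = eH` is
homogeneous. -/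
def IsGOSpace {𝔤 : Type*} [LieRing 𝔤] [LieAlgebra ℝ 𝔤]
    (𝔥 : LieSubalgebra ℝ 𝔤) (𝔪 : Submodule ℝ 𝔤) (p Λ : 𝔤 →ₗ[ℝ] 𝔤) : Prop :=
  ∀ x ∈ 𝔪, x ≠ (0 : 𝔤) → ∃ a ∈ 𝔥, IsGeodesicVector 𝔪 p Λ (a + x)

theorem LinearMap.BilinForm.apply_eq_zero_of_eigenvalue_ne {K V : Type*} [Field K]
    [AddCommGroup V] [Module K V] {B : LinearMap.BilinForm K V} {S : Submodule K V}
    {Λ : V →ₗ[K] V} (hΛsym : ∀ x ∈ S, ∀ y ∈ S, B (Λ x) y = B x (Λ y))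
    {x y : V} (hx : x ∈ S) (hy : y ∈ S) {lam mu : K}
    (hlam : Λ x = lam • x) (hmu : Λ y = mu • y) (hne : lam ≠ mu) : B x y = 0 := by
  have h := hΛsym x hx y hy
  rw [hlam, hmu, map_smul, map_smul, LinearMap.smul_apply, smul_eq_mul, smul_eq_mul] at h
  exact (mul_eq_mul_right_iff.mp h).resolve_left hne

theorem Submodule.sub_apply_mem_of_isCompl {R V : Type*} [Ring R] [AddCommGroup V] [Module R V]
    {K M : Submodule R V} (hKM : IsCompl K M) {p : V →ₗ[R] V}
    (hpM : ∀ x ∈ M, p x = x) (hpK : ∀ x ∈ K, p x = 0) (x : V) : x - p x ∈ K := by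
  obtain ⟨a, ha, b, hb, rfl⟩ := Submodule.mem_sup.mp (hKM.sup_eq_top ▸ Submodule.mem_top (x := x))
  rw [map_add, hpK a ha, hpM b hb, zero_add, add_sub_cancel_right]
  exact ha

section

variable {𝔤 : Type*} [LieRing 𝔤] [LieAlgebra ℝ 𝔤]

structure IsReductiveDecomposition (𝔥 : LieSubalgebra ℝ 𝔤) (𝔪 : Submodule ℝ 𝔤)
    (p : 𝔤 →ₗ[ℝ] 𝔤) : Prop where
  isCompl : IsCompl 𝔥.toSubmodule 𝔪
  killingForm_eq_zero : ∀ x ∈ 𝔥, ∀ y ∈ 𝔪, killingForm ℝ 𝔤 x y = 0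
  lie_mem : ∀ x ∈ 𝔥, ∀ w ∈ 𝔪, ⁅x, w⁆ ∈ 𝔪
  proj_eq_self : ∀ x ∈ 𝔪, p x = x
  proj_eq_zero : ∀ x ∈ 𝔥, p x = 0
  proj_mem : ∀ x, p x ∈ 𝔪

namespace IsReductiveDecomposition

variable {𝔥 : LieSubalgebra ℝ 𝔤} {𝔪 : Submodule ℝ 𝔤} {p : 𝔤 →ₗ[ℝ] 𝔤}

theorem sub_proj_mem (hd : IsReductiveDecomposition 𝔥 𝔪 p) (x : 𝔤) : x - p x ∈ 𝔥 :=
  Submodule.sub_apply_mem_of_isCompl hd.isCompl hd.proj_eq_self hd.proj_eq_zero x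

theorem proj_add (hd : IsReductiveDecomposition 𝔥 𝔪 p) {a v : 𝔤} (ha : a ∈ 𝔥) (hv : v ∈ 𝔪) :
    p (a + v) = v := by
  rw [map_add, hd.proj_eq_zero a ha, hd.proj_eq_self v hv, zero_add]

theorem killingForm_proj_left (hd : IsReductiveDecomposition 𝔥 𝔪 p) (x : 𝔤) {m : 𝔤}
    (hm : m ∈ 𝔪) : killingForm ℝ 𝔤 (p x) m = killingForm ℝ 𝔤 x m := by
  have h := hd.killingForm_eq_zero _ (hd.sub_proj_mem x) m hm
  rwa [map_sub, LinearMap.sub_apply, sub_eq_zero, eq_comm] at h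

theorem proj_eq_zero_of_forall_killingForm_eq_zero (hd : IsReductiveDecomposition 𝔥 𝔪 p)
    (hB : ∀ x : 𝔤, x ≠ 0 → killingForm ℝ 𝔤 x x < 0) {x : 𝔤}
    (hx : ∀ z ∈ 𝔪, killingForm ℝ 𝔤 z x = 0) : p x = 0 := by
  by_contra hpx
  refine (hB _ hpx).ne ?_
  rw [hd.killingForm_proj_left x (hd.proj_mem x), LieModule.traceForm_comm]
  exact hx _ (hd.proj_mem x)

theorem mem_of_forall_killingForm_eq_zero (hd : IsReductiveDecomposition 𝔥 𝔪 p)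
    (hB : ∀ x : 𝔤, x ≠ 0 → killingForm ℝ 𝔤 x x < 0) {x : 𝔤}
    (hx : ∀ k ∈ 𝔥, killingForm ℝ 𝔤 x k = 0) : x ∈ 𝔪 := by
  have hk := hd.sub_proj_mem x
  have h𝔥 : x - p x = 0 := by
    by_contra hne
    refine (hB _ hne).ne ?_
    rw [map_sub, LieModule.traceForm_comm, hx _ hk,
      hd.killingForm_eq_zero _ hk _ (hd.proj_mem x), sub_zero]
  exact sub_eq_zero.mp h𝔥 ▸ hd.proj_mem x

theorem lie_mem_of_eigenvalue_ne (hd : IsReductiveDecomposition 𝔥 𝔪 p)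
    (hB : ∀ x : 𝔤, x ≠ 0 → killingForm ℝ 𝔤 x x < 0) {Λ : 𝔤 →ₗ[ℝ] 𝔤}
    (hΛsym : ∀ x ∈ 𝔪, ∀ y ∈ 𝔪, killingForm ℝ 𝔤 (Λ x) y = killingForm ℝ 𝔤 x (Λ y))
    (hΛequiv : ∀ k ∈ 𝔥, ∀ x ∈ 𝔪, Λ ⁅k, x⁆ = ⁅k, Λ x⁆)
    {X Y : 𝔤} (hX : X ∈ 𝔪) (hY : Y ∈ 𝔪) {lam mu : ℝ}
    (hlam : Λ X = lam • X) (hmu : Λ Y = mu • Y) (hne : lam ≠ mu) : ⁅X, Y⁆ ∈ 𝔪 := by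
  refine hd.mem_of_forall_killingForm_eq_zero hB fun k hk => ?_
  have hkY : Λ ⁅k, Y⁆ = mu • ⁅k, Y⁆ := by rw [hΛequiv k hk Y hY, hmu, lie_smul]
  have hXkY := LinearMap.BilinForm.apply_eq_zero_of_eigenvalue_ne hΛsym hX
    (hd.lie_mem k hk Y hY) hlam hkY hne
  rw [LieModule.traceForm_apply_lie_apply, ← lie_skew, map_neg, hXkY, neg_zero]

end IsReductiveDecomposition

theorem IsGeodesicVector.proj_lie_eq_zero {𝔥 : LieSubalgebra ℝ 𝔤} {𝔪 : Submodule ℝ 𝔤}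
    {p Λ : 𝔤 →ₗ[ℝ] 𝔤} (hd : IsReductiveDecomposition 𝔥 𝔪 p)
    (hB : ∀ x : 𝔤, x ≠ 0 → killingForm ℝ 𝔤 x x < 0) (hΛ𝔪 : ∀ x ∈ 𝔪, Λ x ∈ 𝔪)
    (hΛsym : ∀ x ∈ 𝔪, ∀ y ∈ 𝔪, killingForm ℝ 𝔤 (Λ x) y = killingForm ℝ 𝔤 x (Λ y))
    {a V : 𝔤} (ha : a ∈ 𝔥) (hV : V ∈ 𝔪) (hgeo : IsGeodesicVector 𝔪 p Λ (a + V)) :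
    p ⁅a + V, Λ V⁆ = 0 := by
  refine hd.proj_eq_zero_of_forall_killingForm_eq_zero hB fun Z hZ => ?_
  have h := hgeo Z hZ
  rw [hd.proj_add ha hV, neg_eq_zero, hΛsym _ (hd.proj_mem _) V hV,
    hd.killingForm_proj_left _ (hΛ𝔪 V hV), LieModule.traceForm_apply_lie_apply'] at h
  exact neg_eq_zero.mp h

theorem exists_smul_lie_eq_of_isGOSpace {𝔥 : LieSubalgebra ℝ 𝔤} {𝔪 : Submodule ℝ 𝔤}
    {p Λ : 𝔤 →ₗ[ℝ] 𝔤} (hd : IsReductiveDecomposition 𝔥 𝔪 p)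
    (hB : ∀ x : 𝔤, x ≠ 0 → killingForm ℝ 𝔤 x x < 0) (hΛ𝔪 : ∀ x ∈ 𝔪, Λ x ∈ 𝔪)
    (hΛsym : ∀ x ∈ 𝔪, ∀ y ∈ 𝔪, killingForm ℝ 𝔤 (Λ x) y = killingForm ℝ 𝔤 x (Λ y))
    (hΛequiv : ∀ k ∈ 𝔥, ∀ x ∈ 𝔪, Λ ⁅k, x⁆ = ⁅k, Λ x⁆) (hgo : IsGOSpace 𝔥 𝔪 p Λ)
    {X Y : 𝔤} (hX : X ∈ 𝔪) (hY : Y ∈ 𝔪) {lam mu : ℝ}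
    (hlam : Λ X = lam • X) (hmu : Λ Y = mu • Y) (hne : lam ≠ mu) :
    ∃ a ∈ 𝔥, (lam - mu) • ⁅X, Y⁆ = lam • ⁅a, X⁆ + mu • ⁅a, Y⁆ := by
  by_cases hXY : X + Y = 0
  · refine ⟨0, 𝔥.zero_mem, ?_⟩
    rw [eq_neg_of_add_eq_zero_right hXY]
    simp
  obtain ⟨a, ha, hgeo⟩ := hgo (X + Y) (𝔪.add_mem hX hY) hXY
  have hW := hgeo.proj_lie_eq_zero hd hB hΛ𝔪 hΛsym ha (𝔪.add_mem hX hY)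
  have hexpand : ⁅a + (X + Y), Λ (X + Y)⁆
      = lam • ⁅a, X⁆ + mu • ⁅a, Y⁆ - (lam - mu) • ⁅X, Y⁆ := by
    rw [map_add, hlam, hmu]
    simp only [add_lie, lie_add, lie_smul, lie_self]
    rw [← lie_skew Y X]
    module
  have hmem : lam • ⁅a, X⁆ + mu • ⁅a, Y⁆ - (lam - mu) • ⁅X, Y⁆ ∈ 𝔪 :=
    𝔪.sub_mem (𝔪.add_mem (𝔪.smul_mem _ (hd.lie_mem a ha X hX))
      (𝔪.smul_mem _ (hd.lie_mem a ha Y hY)))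
      (𝔪.smul_mem _ (hd.lie_mem_of_eigenvalue_ne hB hΛsym hΛequiv hX hY hlam hmu hne))
  rw [hexpand, hd.proj_eq_self _ hmem, sub_eq_zero] at hW
  exact ⟨a, ha, hW.symm⟩

end

theorem eigenvector_bracket_of_goSpace_general
    {𝔤 : Type*} [LieRing 𝔤] [LieAlgebra ℝ 𝔤]
    -- `M` compact, `G` compact connected semisimple:
    -- the Killing form of `𝔤` is negative definite
    (hcompact : ∀ x : 𝔤, x ≠ 0 → killingForm ℝ 𝔤 x x < 0)
    -- the `B`-orthogonal reductive decomposition `𝔤 = 𝔥 ⊕ 𝔪`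
    (𝔥 : LieSubalgebra ℝ 𝔤) (𝔪 : Submodule ℝ 𝔤)
    (hcompl : IsCompl 𝔥.toSubmodule 𝔪)
    (horth : ∀ x ∈ 𝔥, ∀ y ∈ 𝔪, killingForm ℝ 𝔤 x y = 0)
    (hinv : ∀ x ∈ 𝔥, ∀ w ∈ 𝔪, ⁅x, w⁆ ∈ 𝔪)
    -- `p` is the projection onto `𝔪` along `𝔥`
    (p : 𝔤 →ₗ[ℝ] 𝔤)
    (hp𝔪 : ∀ x ∈ 𝔪, p x = x) (hp𝔥 : ∀ x ∈ 𝔥, p x = 0) (hpr : ∀ x : 𝔤, p x ∈ 𝔪)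
    -- `Λ` is the associated operator of the metric `g`: `⟨u, v⟩ = B(Λu, v)` on `𝔪`
    (Λ : 𝔤 →ₗ[ℝ] 𝔤)
    (hΛ𝔪 : ∀ x ∈ 𝔪, Λ x ∈ 𝔪)
    (hΛsym : ∀ x ∈ 𝔪, ∀ y ∈ 𝔪, killingForm ℝ 𝔤 (Λ x) y = killingForm ℝ 𝔤 x (Λ y))
    (hΛequiv : ∀ k ∈ 𝔥, ∀ x ∈ 𝔪, Λ ⁅k, x⁆ = ⁅k, Λ x⁆)
    -- `(G/H, g)` is a g.o. space
    (hgo : IsGOSpace 𝔥 𝔪 p Λ)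
    -- `X, Y ∈ 𝔪` are eigenvectors of `Λ` with distinct eigenvalues `lam ≠ mu`
    (X Y : 𝔤) (hX : X ∈ 𝔪) (hY : Y ∈ 𝔪)
    (lam mu : ℝ) (hlam : Λ X = lam • X) (hmu : Λ Y = mu • Y) (hne : lam ≠ mu) :
    ∃ h ∈ 𝔥, ⁅X, Y⁆ = (lam / (lam - mu)) • ⁅h, X⁆ + (mu / (lam - mu)) • ⁅h, Y⁆ := by
  obtain ⟨a, ha, h⟩ := exists_smul_lie_eq_of_isGOSpace ⟨hcompl, horth, hinv, hp𝔪, hp𝔥, hpr⟩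
    hcompact hΛ𝔪 hΛsym hΛequiv hgo hX hY hlam hmu hne
  refine ⟨a, ha, ?_⟩
  rw [div_eq_inv_mul, div_eq_inv_mul, mul_smul, mul_smul, ← smul_add, ← h, smul_smul,
    inv_mul_cancel₀ (sub_ne_zero.mpr hne), one_smul]

/-- **Proposition 5 of Alekseevsky–Nikonorov**.
Let `(M = G/H, g)` be a compact g.o. space with associated operator `Λ` and
`B`-orthogonal reductive decomposition `𝔤 = 𝔥 ⊕ 𝔪`.  If `X, Y ∈ 𝔪` are eigenvectors of
`Λ` with distinct eigenvalues `λ` and `μ`, then there exists `h ∈ 𝔥` with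
`[X, Y] = (λ/(λ-μ))[h, X] + (μ/(λ-μ))[h, Y]`. -/
theorem eigenvector_bracket_of_goSpace
    {𝔤 : Type*} [LieRing 𝔤] [LieAlgebra ℝ 𝔤] [FiniteDimensional ℝ 𝔤]
    -- `M` compact, `G` compact connected semisimple:
    -- the Killing form of `𝔤` is negative definite
    (hcompact : ∀ x : 𝔤, x ≠ 0 → killingForm ℝ 𝔤 x x < 0)
    -- the `B`-orthogonal reductive decomposition `𝔤 = 𝔥 ⊕ 𝔪`
    (𝔥 : LieSubalgebra ℝ 𝔤) (𝔪 : Submodule ℝ 𝔤)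
    (hcompl : IsCompl 𝔥.toSubmodule 𝔪)
    (horth : ∀ x ∈ 𝔥, ∀ y ∈ 𝔪, killingForm ℝ 𝔤 x y = 0)
    (hinv : ∀ x ∈ 𝔥, ∀ w ∈ 𝔪, ⁅x, w⁆ ∈ 𝔪)
    -- `p` is the projection onto `𝔪` along `𝔥`
    (p : 𝔤 →ₗ[ℝ] 𝔤)
    (hp𝔪 : ∀ x ∈ 𝔪, p x = x) (hp𝔥 : ∀ x ∈ 𝔥, p x = 0) (hpr : ∀ x : 𝔤, p x ∈ 𝔪)
    -- `Λ` is the associated operator of the metric `g`: `⟨u, v⟩ = B(Λu, v)` on `𝔪`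
    (Λ : 𝔤 →ₗ[ℝ] 𝔤)
    (hΛ𝔪 : ∀ x ∈ 𝔪, Λ x ∈ 𝔪)
    (hΛsym : ∀ x ∈ 𝔪, ∀ y ∈ 𝔪, killingForm ℝ 𝔤 (Λ x) y = killingForm ℝ 𝔤 x (Λ y))
    (hΛpos : ∀ x ∈ 𝔪, x ≠ 0 → 0 < -(killingForm ℝ 𝔤 (Λ x) x))
    (hΛequiv : ∀ k ∈ 𝔥, ∀ x ∈ 𝔪, Λ ⁅k, x⁆ = ⁅k, Λ x⁆)
    -- `(G/H, g)` is a g.o. space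
    (hgo : IsGOSpace 𝔥 𝔪 p Λ)
    -- `X, Y ∈ 𝔪` are eigenvectors of `Λ` with distinct eigenvalues `lam ≠ mu`
    (X Y : 𝔤) (hX : X ∈ 𝔪) (hY : Y ∈ 𝔪)
    (lam mu : ℝ) (hlam : Λ X = lam • X) (hmu : Λ Y = mu • Y) (hne : lam ≠ mu) :
    ∃ h ∈ 𝔥, ⁅X, Y⁆ = (lam / (lam - mu)) • ⁅h, X⁆ + (mu / (lam - mu)) • ⁅h, Y⁆ :=
  eigenvector_bracket_of_goSpace_general hcompact 𝔥 𝔪 hcompl horth hinv p hp𝔪 hp𝔥 hpr Λ hΛ𝔪 hΛsym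
    hΛequiv hgo X Y hX hY lam mu hlam hmu hne
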